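/- arXiv:1811.00155 — 4 statements merged into one kernel-verified Lean document; each statement's English description precedes it below -/
import Mathlib

section
/- Let K and K̃ be symmetric positive semidefinite n×n matrices with K̃ of rank m, and λ > 0. If (1 - Δ₁)(K + λI) ⪯ K̃ + λI in the semidefinite order, then Δ₁ ≥ λ_{m+1}(K) / (λ_{m+1}(K) + λ), where λ_{m+1}(K) denotes the (m+1)-st largest eigenvalue of K. -/
/-!
Pick `x ≠ 0` in `ker K̃` and in the span of the eigenvectors of `K` belonging to its `m + 1`
largest eigenvalues; it exists because `dim ker K̃ = n - m`. Then `xᵀ (K̃ + λI) x = λ ‖x‖²` while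
`xᵀ (K + λI) x ≥ (λ_{m+1}(K) + λ) ‖x‖²`, so the hypothesis forces
`(1 - Δ₁) (λ_{m+1}(K) + λ) ≤ λ`, which rearranges to the claim.
-/

open Matrix

theorem Orthonormal.mul_norm_sq_le_inner_map_self_of_mem_span {ι E : Type*} [Fintype ι]
    [NormedAddCommGroup E] [InnerProductSpace ℝ E] {v : ι → E} (hv : Orthonormal ℝ v)
    {T : E →ₗ[ℝ] E} {μ : ι → ℝ} (hT : ∀ i, T (v i) = μ i • v i) {c : ℝ} (hc : ∀ i, c ≤ μ i)
    {x : E} (hx : x ∈ Submodule.span ℝ (Set.range v)) :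
    c * ‖x‖ ^ 2 ≤ inner ℝ x (T x) := by
  obtain ⟨a, rfl⟩ := (Submodule.mem_span_range_iff_exists_fun ℝ).mp hx
  have hTx : T (∑ i, a i • v i) = ∑ i, (a i * μ i) • v i := by
    simp only [map_sum, map_smul, hT, smul_smul]
  rw [hTx, ← real_inner_self_eq_norm_sq, hv.inner_sum, hv.inner_sum, Finset.mul_sum]
  refine Finset.sum_le_sum fun i _ => ?_
  simp only [conj_trivial]
  nlinarith [hc i, mul_self_nonneg (a i)]

theorem Submodule.exists_mem_inf_ne_zero_of_finrank_lt_add {K V : Type*} [DivisionRing K]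
    [AddCommGroup V] [Module K V] [FiniteDimensional K V] (s t : Submodule K V)
    (h : Module.finrank K V < Module.finrank K s + Module.finrank K t) :
    ∃ x ∈ s, x ∈ t ∧ x ≠ 0 := by
  by_contra! hst
  exact h.not_ge <| Submodule.finrank_add_finrank_le_of_disjoint <|
    Submodule.disjoint_def.mpr hst

theorem Matrix.finrank_ker_toEuclideanLin {𝕜 m n : Type*} [RCLike 𝕜] [Fintype m] [Fintype n]
    [DecidableEq n] (A : Matrix m n 𝕜) :
    Module.finrank 𝕜 (LinearMap.ker (toEuclideanLin A)) = Fintype.card n - A.rank := by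
  have := (toLpLin 2 2 A).finrank_range_add_finrank_ker
  rw [A.rank_eq_finrank_range_toLin (PiLp.basisFun 2 𝕜 m) (PiLp.basisFun 2 𝕜 n),
    ← toLpLin_eq_toLin, ← finrank_euclideanSpace (𝕜 := 𝕜), ← this, Nat.add_sub_cancel_left]

theorem Matrix.IsHermitian.exists_mem_ne_zero_mul_norm_sq_le_inner {n : ℕ}
    {A : Matrix (Fin n) (Fin n) ℝ} (hA : A.IsHermitian) {μ : Fin n → ℝ} (hμ : Antitone μ)
    {σ : Equiv.Perm (Fin n)} (hσ : μ = hA.eigenvalues ∘ σ) {k : ℕ} (hk : k < n)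
    {W : Submodule ℝ (EuclideanSpace ℝ (Fin n))} (hW : n ≤ k + Module.finrank ℝ W) :
    ∃ x ∈ W, x ≠ 0 ∧ μ ⟨k, hk⟩ * ‖x‖ ^ 2 ≤ inner ℝ x (toEuclideanLin A x) := by
  let v : Fin (k + 1) → EuclideanSpace ℝ (Fin n) := fun i =>
    hA.eigenvectorBasis (σ (Fin.castLE hk i))
  have hv : Orthonormal ℝ v :=
    hA.eigenvectorBasis.orthonormal.comp _ (σ.injective.comp (Fin.castLE_injective hk))
  have hVW : Module.finrank ℝ (EuclideanSpace ℝ (Fin n)) <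
      Module.finrank ℝ (Submodule.span ℝ (Set.range v)) + Module.finrank ℝ W := by
    rw [finrank_span_eq_card hv.linearIndependent, finrank_euclideanSpace, Fintype.card_fin,
      Fintype.card_fin]
    omega
  obtain ⟨x, hxV, hxW, hx0⟩ := Submodule.exists_mem_inf_ne_zero_of_finrank_lt_add _ _ hVW
  have hle (i : Fin (k + 1)) : Fin.castLE hk i ≤ ⟨k, hk⟩ := Nat.lt_succ_iff.mp i.is_lt
  refine ⟨x, hxW, hx0, hv.mul_norm_sq_le_inner_map_self_of_mem_span
    (μ := fun i => μ (Fin.castLE hk i)) (fun i => ?_) (fun i => hμ (hle i)) hxV⟩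
  rw [hσ]
  exact congrArg (WithLp.toLp 2) (hA.mulVec_eigenvectorBasis _)

theorem stmt4_general {n : ℕ} (m : ℕ) (hmn : m < n)
    (K Kt : Matrix (Fin n) (Fin n) ℝ)
    (hK : K.PosSemidef)
    (hrank : Kt.rank = m)
    (l Δ₁ : ℝ) (hl : 0 < l) (hΔ : Δ₁ ∈ Set.Icc (0 : ℝ) 1)
    (μ : Fin n → ℝ) (hμanti : Antitone μ)
    (hμ : ∃ σ : Equiv.Perm (Fin n), μ = hK.1.eigenvalues ∘ σ)
    (h : ((Kt + l • 1) - (1 - Δ₁) • (K + l • 1)).PosSemidef) :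
    μ ⟨m, hmn⟩ / (μ ⟨m, hmn⟩ + l) ≤ Δ₁ := by
  obtain ⟨σ, hσ⟩ := hμ
  obtain ⟨x, hKtx, hx0, hKx⟩ := hK.1.exists_mem_ne_zero_mul_norm_sq_le_inner hμanti hσ hmn
    (W := LinearMap.ker (toEuclideanLin Kt))
    (by rw [finrank_ker_toEuclideanLin, hrank, Fintype.card_fin]; omega)
  have hquad := (isPositive_toEuclideanLin_iff.mpr h).inner_nonneg_right x
  simp only [map_sub, map_add, map_smul, LinearMap.sub_apply, LinearMap.add_apply,
    LinearMap.smul_apply, LinearMap.mem_ker.mp hKtx, inner_sub_right, inner_add_right,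
    inner_smul_right, inner_zero_right, toLpLin_one, LinearMap.id_apply,
    real_inner_self_eq_norm_sq] at hquad
  have hnorm : 0 < ‖x‖ ^ 2 := by positivity
  have hμ0 : 0 ≤ μ ⟨m, hmn⟩ := hσ ▸ hK.eigenvalues_nonneg _
  have hgap : (1 - Δ₁) * (μ ⟨m, hmn⟩ + l) ≤ l :=
    le_of_mul_le_mul_right (by nlinarith [hΔ.2]) hnorm
  rw [div_le_iff₀ (by positivity)]
  linarith

theorem stmt4 {n : ℕ} (m : ℕ) (hmn : m < n)
    (K Kt : Matrix (Fin n) (Fin n) ℝ)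
    (hK : K.PosSemidef) (hKt : Kt.PosSemidef)
    (hrank : Kt.rank = m)
    (l Δ₁ : ℝ) (hl : 0 < l) (hΔ : Δ₁ ∈ Set.Icc (0 : ℝ) 1)
    (μ : Fin n → ℝ) (hμanti : Antitone μ)
    (hμ : ∃ σ : Equiv.Perm (Fin n), μ = hK.1.eigenvalues ∘ σ)
    (h : ((Kt + l • 1) - (1 - Δ₁) • (K + l • 1)).PosSemidef) :
    μ ⟨m, hmn⟩ / (μ ⟨m, hmn⟩ + l) ≤ Δ₁ :=
  stmt4_general m hmn K Kt hK hrank l Δ₁ hl hΔ μ hμanti hμ h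
end

section
/- Let K̃ be a symmetric PSD n×n matrix of rank m and K a symmetric PSD n×n matrix, with K̃ + λI ⪯ (1+Δ₂)(K + λI) for λ > 0, Δ₂ ≥ 0. Then tr(K̃(K̃ + λI)^{-1}) ≤ tr(K(K + λI)^{-1}) + m·Δ₂/(1+Δ₂). -/
/-!
Both traces equal `n - l * tr (· + l • 1)⁻¹`, so it suffices to compare `tr (K + l • 1)⁻¹` with
`tr (Kt + l • 1)⁻¹ = ∑ 1 / (μᵢ + l)` in an orthonormal eigenbasis `(vᵢ, μᵢ)` of `Kt`. Put
`qᵢ = vᵢ ⬝ (K + l • 1)⁻¹ vᵢ`. Since `K + l • 1 ⪰ l • 1`, `l qᵢ ≤ 1`; since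
`(1 + Δ₂)(K + l • 1) ⪰ Kt + l • 1`, which has `vᵢ` as eigenvector, `qᵢ ≤ (1 + Δ₂) / (μᵢ + l)`.
When `μᵢ = 0` the first bound already reads `l qᵢ ≤ l / (μᵢ + l)`; for the `m` indices with
`μᵢ ≠ 0` the two bounds together give `l qᵢ ≤ l / (μᵢ + l) + Δ₂ / (1 + Δ₂)`.
-/

open Matrix

lemma le_add_div_one_add_of_le_one_of_le_mul {s t Δ : ℝ} (hΔ : 0 ≤ Δ) (hs : s ≤ 1)
    (hst : s ≤ (1 + Δ) * t) : s ≤ t + Δ / (1 + Δ) := by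
  rw [← sub_le_iff_le_add', le_div_iff₀ (by positivity)]
  nlinarith [mul_le_mul_of_nonneg_left hs hΔ]

lemma Matrix.PosSemidef.posDef_add_smul_one {ι : Type*} [DecidableEq ι] {A : Matrix ι ι ℝ}
    (hA : A.PosSemidef) {l : ℝ} (hl : 0 < l) : (A + l • 1).PosDef :=
  PosDef.posSemidef_add hA (PosDef.one.smul hl)

section

variable {ι : Type*} [Fintype ι]

lemma EuclideanSpace.dotProduct_self_of_norm_eq_one {v : EuclideanSpace ℝ ι} (hv : ‖v‖ = 1) :
    ⇑v ⬝ᵥ ⇑v = 1 := by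
  have h := real_inner_self_eq_norm_sq v
  rw [EuclideanSpace.inner_eq_star_dotProduct, hv] at h
  simpa using h

lemma Matrix.IsHermitian.dotProduct_mulVec_comm {A : Matrix ι ι ℝ} (hA : A.IsHermitian)
    (u v : ι → ℝ) : u ⬝ᵥ A *ᵥ v = v ⬝ᵥ A *ᵥ u := by
  rw [dotProduct_mulVec, ← mulVec_transpose, dotProduct_comm,
    ← conjTranspose_eq_transpose_of_trivial, hA.eq]

variable [DecidableEq ι]

lemma Matrix.add_smul_one_mulVec {R : Type*} [CommSemiring R] {A : Matrix ι ι R} {v : ι → R}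
    {μ : R} (hv : A *ᵥ v = μ • v) (l : R) : (A + l • 1) *ᵥ v = (μ + l) • v := by
  rw [add_mulVec, hv, smul_mulVec, one_mulVec, add_smul]

lemma Matrix.inv_mulVec_eq_inv_smul {A : Matrix ι ι ℝ} (hA : IsUnit A.det) {v : ι → ℝ} {a : ℝ}
    (hv : A *ᵥ v = a • v) : A⁻¹ *ᵥ v = a⁻¹ • v := by
  have h : v = a • A⁻¹ *ᵥ v := by
    rw [← mulVec_smul, ← hv, mulVec_mulVec, nonsing_inv_mul _ hA, one_mulVec]
  rcases eq_or_ne a 0 with rfl | ha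
  · rw [zero_smul] at h
    simp [h]
  · conv_rhs => rw [h]
    rw [smul_smul, inv_mul_cancel₀ ha, one_smul]

lemma Matrix.PosSemidef.isUnit_det_add_smul_one {A : Matrix ι ι ℝ} (hA : A.PosSemidef) {l : ℝ}
    (hl : 0 < l) : IsUnit (A + l • 1).det :=
  (isUnit_iff_isUnit_det _).mp (hA.posDef_add_smul_one hl).isUnit

lemma Matrix.trace_mul_inv_add_smul_one {K : Matrix ι ι ℝ} {l : ℝ}
    (hK : IsUnit (K + l • 1).det) :
    (K * (K + l • 1)⁻¹).trace = Fintype.card ι - l * (K + l • 1)⁻¹.trace := by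
  have : K * (K + l • 1)⁻¹ = 1 - l • (K + l • 1)⁻¹ := by
    rw [eq_sub_iff_add_eq]
    conv_rhs => rw [← mul_nonsing_inv _ hK]
    rw [add_mul, Matrix.smul_mul, Matrix.one_mul]
  rw [this, trace_sub, trace_smul, trace_one, smul_eq_mul]

lemma Matrix.trace_eq_sum_dotProduct_mulVec (M : Matrix ι ι ℝ)
    (b : OrthonormalBasis ι ℝ (EuclideanSpace ℝ ι)) :
    M.trace = ∑ i, ⇑(b i) ⬝ᵥ M *ᵥ ⇑(b i) := by
  rw [← trace_toLin_eq M (PiLp.basisFun 2 ℝ ι), ← toLpLin_eq_toLin,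
    LinearMap.trace_eq_sum_inner _ b]
  simp [EuclideanSpace.inner_eq_star_dotProduct, dotProduct_comm]

lemma Matrix.IsHermitian.sum_ite_eigenvalues_eq_zero {A : Matrix ι ι ℝ} (hA : A.IsHermitian)
    (x : ℝ) : ∑ i, (if hA.eigenvalues i = 0 then 0 else x) = A.rank * x := by
  rw [Finset.sum_ite, Finset.sum_const_zero, zero_add, Finset.sum_const, nsmul_eq_mul,
    hA.rank_eq_card_non_zero_eigs, Fintype.card_subtype]

lemma Matrix.PosSemidef.trace_inv_add_smul_one {A : Matrix ι ι ℝ} (hA : A.PosSemidef) {l : ℝ}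
    (hl : 0 < l) : (A + l • 1)⁻¹.trace = ∑ i, (hA.isHermitian.eigenvalues i + l)⁻¹ := by
  rw [trace_eq_sum_dotProduct_mulVec _ hA.isHermitian.eigenvectorBasis]
  refine Finset.sum_congr rfl fun i _ => ?_
  have hv := add_smul_one_mulVec (hA.isHermitian.mulVec_eigenvectorBasis i) l
  rw [inv_mulVec_eq_inv_smul (hA.isUnit_det_add_smul_one hl) hv, dotProduct_smul, smul_eq_mul,
    EuclideanSpace.dotProduct_self_of_norm_eq_one (hA.isHermitian.eigenvectorBasis.orthonormal.1 i),
    mul_one]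

lemma Matrix.PosDef.dotProduct_inv_mulVec_le {A B : Matrix ι ι ℝ} {c : ℝ} (hc : 0 < c)
    (hA : A.PosDef) (hB : B.PosDef) (hAB : (c • B - A).PosSemidef) (x : ι → ℝ) :
    x ⬝ᵥ B⁻¹ *ᵥ x ≤ c * (x ⬝ᵥ A⁻¹ *ᵥ x) := by
  set z := B⁻¹ *ᵥ x
  set u := A⁻¹ *ᵥ x
  have hBz : B *ᵥ z = x := by
    rw [mulVec_mulVec, mul_nonsing_inv _ ((isUnit_iff_isUnit_det _).mp hB.isUnit), one_mulVec]
  have hAu : A *ᵥ u = x := by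
    rw [mulVec_mulVec, mul_nonsing_inv _ ((isUnit_iff_isUnit_det _).mp hA.isUnit), one_mulVec]
  have hw : 0 ≤ (c • u - z) ⬝ᵥ A *ᵥ (c • u - z) := by
    simpa using hA.posSemidef.dotProduct_mulVec_nonneg (c • u - z)
  have hz : 0 ≤ z ⬝ᵥ (c • B - A) *ᵥ z := by
    simpa using hAB.dotProduct_mulVec_nonneg z
  -- the sum of the two nonnegative quantities is `c * (c * (x ⬝ᵥ u) - x ⬝ᵥ z)`
  have hw_eq : (c • u - z) ⬝ᵥ A *ᵥ (c • u - z)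
      = c ^ 2 * (x ⬝ᵥ u) - 2 * c * (x ⬝ᵥ z) + z ⬝ᵥ A *ᵥ z := by
    simp only [mulVec_sub, mulVec_smul, hAu, sub_dotProduct, dotProduct_sub, smul_dotProduct,
      dotProduct_smul, smul_eq_mul]
    rw [hA.isHermitian.dotProduct_mulVec_comm u z, hAu, dotProduct_comm u x, dotProduct_comm z x]
    ring
  have hz_eq : z ⬝ᵥ (c • B - A) *ᵥ z = c * (x ⬝ᵥ z) - z ⬝ᵥ A *ᵥ z := by
    rw [sub_mulVec, smul_mulVec, hBz, dotProduct_sub, dotProduct_smul, smul_eq_mul,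
      dotProduct_comm z x]
  nlinarith

lemma Matrix.PosDef.dotProduct_inv_mulVec_le_of_mulVec_eq_smul {A B : Matrix ι ι ℝ} {c a : ℝ}
    (hc : 0 < c) (hA : A.PosDef) (hB : B.PosDef) (hAB : (c • B - A).PosSemidef) {v : ι → ℝ}
    (hv : A *ᵥ v = a • v) : v ⬝ᵥ B⁻¹ *ᵥ v ≤ c * a⁻¹ * (v ⬝ᵥ v) := by
  have h := hA.dotProduct_inv_mulVec_le hc hB hAB v
  rwa [inv_mulVec_eq_inv_smul ((isUnit_iff_isUnit_det _).mp hA.isUnit) hv, dotProduct_smul,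
    smul_eq_mul, ← mul_assoc] at h

lemma Matrix.PosSemidef.mul_dotProduct_inv_add_smul_one_mulVec_le {K Kt : Matrix ι ι ℝ}
    {l Δ μ : ℝ} (hK : K.PosSemidef) (hKt : Kt.PosSemidef) (hl : 0 < l) (hΔ : 0 ≤ Δ)
    (h : ((1 + Δ) • (K + l • 1) - (Kt + l • 1)).PosSemidef) {v : ι → ℝ} (hv : v ⬝ᵥ v = 1)
    (hKtv : Kt *ᵥ v = μ • v) :
    l * (v ⬝ᵥ (K + l • 1)⁻¹ *ᵥ v) ≤ l * (μ + l)⁻¹ + if μ = 0 then 0 else Δ / (1 + Δ) := by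
  have hB : (K + l • 1).PosDef := hK.posDef_add_smul_one hl
  have h_le_one : l * (v ⬝ᵥ (K + l • 1)⁻¹ *ᵥ v) ≤ 1 := by
    have hK' : ((1 : ℝ) • (K + l • 1) - l • 1).PosSemidef := by simpa using hK
    have := (PosDef.one.smul hl).dotProduct_inv_mulVec_le_of_mulVec_eq_smul one_pos hB hK'
      (by rw [smul_mulVec, one_mulVec] : (l • 1 : Matrix ι ι ℝ) *ᵥ v = l • v)
    rw [hv, one_mul, mul_one] at this
    calc _ ≤ l * l⁻¹ := by gcongr
      _ = 1 := mul_inv_cancel₀ hl.ne'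
  have h_le_mul : l * (v ⬝ᵥ (K + l • 1)⁻¹ *ᵥ v) ≤ (1 + Δ) * (l * (μ + l)⁻¹) := by
    have := (hKt.posDef_add_smul_one hl).dotProduct_inv_mulVec_le_of_mulVec_eq_smul
      (by positivity) hB h (add_smul_one_mulVec hKtv l)
    rw [hv, mul_one] at this
    linarith [mul_le_mul_of_nonneg_left this hl.le]
  split_ifs with hμ
  · simpa [hμ, hl.ne'] using h_le_one
  · exact le_add_div_one_add_of_le_one_of_le_mul hΔ h_le_one h_le_mul

end

theorem stmt7 {n : ℕ} (K Kt : Matrix (Fin n) (Fin n) ℝ) (m : ℕ)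
    (hK : K.PosSemidef) (hKt : Kt.PosSemidef) (hrank : Kt.rank = m)
    (l Δ₂ : ℝ) (hl : 0 < l) (hΔ : 0 ≤ Δ₂)
    (h : ((1 + Δ₂) • (K + l • 1) - (Kt + l • 1)).PosSemidef) :
    (Kt * (Kt + l • 1)⁻¹).trace ≤ (K * (K + l • 1)⁻¹).trace + m * (Δ₂ / (1 + Δ₂)) := by
  have hH := hKt.isHermitian
  have hbound i := hK.mul_dotProduct_inv_add_smul_one_mulVec_le hKt hl hΔ h
    (EuclideanSpace.dotProduct_self_of_norm_eq_one (hH.eigenvectorBasis.orthonormal.1 i))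
    (hH.mulVec_eigenvectorBasis i)
  have hsum := Finset.sum_le_sum fun i (_ : i ∈ Finset.univ) => hbound i
  rw [Finset.sum_add_distrib, hH.sum_ite_eigenvalues_eq_zero, hrank, ← Finset.mul_sum,
    ← Finset.mul_sum, ← trace_eq_sum_dotProduct_mulVec, ← hKt.trace_inv_add_smul_one hl] at hsum
  rw [trace_mul_inv_add_smul_one (hKt.isUnit_det_add_smul_one hl),
    trace_mul_inv_add_smul_one (hK.isUnit_det_add_smul_one hl)]
  linarith
end

section
/- In fixed design kernel ridge regression, suppose K̃ + λI is a (Δ₁, Δ₂)-spectral approximation of K + λI with Δ₁ ∈ [0,1), Δ₂ ≥ 0, let m = rank(K̃), and let R(f_{K̃}) = (λ²/n)ȳᵀ(K̃+λI)^{-2}ȳ + (σ²/n)tr(K̃²(K̃+λI)^{-2}) and R̂(f_K) = (λ/n)ȳᵀ(K+λI)^{-1}ȳ + (σ²/n)tr(K(K+λI)^{-1}). Then R(f_{K̃}) ≤ (1/(1-Δ₁)) R̂(f_K) + (Δ₂/(1+Δ₂))·(m/n)·σ². -/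
/-!
Write `A = K̃ + λI` and `B = K + λI`. For the bias, `λA⁻² ⪯ A⁻¹` (the difference is `A⁻¹K̃A⁻¹`)
and inversion reverses the Loewner order, so `A⁻¹ ⪯ (1 - Δ₁)⁻¹B⁻¹`.

For the variance, evaluate both traces in an orthonormal eigenbasis `(vᵢ)` of `K̃`, with eigenvalues
`eᵢ`. Putting `bᵢ = vᵢᵀB⁻¹vᵢ`, the `i`-th terms are `(eᵢ/(eᵢ+λ))²` and `vᵢᵀKB⁻¹vᵢ = 1 - λbᵢ`.
The upper approximation gives `bᵢ ≤ (1 + Δ₂)/(eᵢ+λ)` and `λI ⪯ B` gives `λbᵢ ≤ 1`, hence for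
`eᵢ ≠ 0`: `(eᵢ/(eᵢ+λ))² ≤ 1 - λ/(eᵢ+λ) ≤ Δ₂/(1+Δ₂) + (1 - λbᵢ)/(1+Δ₂)`, and
`1 + Δ₂ ≥ 1 - Δ₁`. Zero eigenvalues contribute nothing, and there are `m = rank K̃` nonzero ones.
-/

open Matrix
open scoped MatrixOrder

namespace Matrix

variable {ι : Type*}

lemma PosSemidef.posDef_add_smul_one_s8 [DecidableEq ι] {A : Matrix ι ι ℝ} (hA : A.PosSemidef)
    {l : ℝ} (hl : 0 < l) :
    (A + l • 1).PosDef :=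
  PosDef.posSemidef_add hA (PosDef.one.smul hl)

variable [Fintype ι]

lemma dotProduct_mulVec_le_of_le {A B : Matrix ι ι ℝ} (h : A ≤ B) (y : ι → ℝ) :
    y ⬝ᵥ A *ᵥ y ≤ y ⬝ᵥ B *ᵥ y := by
  have := h.dotProduct_mulVec_nonneg y
  rw [star_trivial, sub_mulVec, dotProduct_sub] at this
  linarith

variable [DecidableEq ι]

lemma PosDef.inv_le_inv {A B : Matrix ι ι ℝ} (hA : A.PosDef) (hAB : A ≤ B) : B⁻¹ ≤ A⁻¹ := by
  have hB : B.PosDef := by simpa using hA.add_posSemidef hAB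
  have hAu := (isUnit_iff_isUnit_det A).mp hA.isUnit
  have hBu := (isUnit_iff_isUnit_det B).mp hB.isUnit
  -- expand `A⁻¹ - B⁻¹ = B⁻¹ (B - A) A⁻¹` once more through `A⁻¹ = A⁻¹ (A + (B - A)) B⁻¹`
  have key : A⁻¹ - B⁻¹ =
      B⁻¹ * (B - A) * B⁻¹ᴴ + (B⁻¹ * (B - A)) * A⁻¹ * (B⁻¹ * (B - A))ᴴ := by
    simp only [conjTranspose_mul, hB.posSemidef.inv.isHermitian.eq, hAB.isHermitian.eq]
    simp only [Matrix.mul_sub, Matrix.sub_mul, Matrix.mul_assoc, nonsing_inv_mul _ hBu,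
      mul_nonsing_inv _ hBu, nonsing_inv_mul_cancel_left _ _ hAu, mul_nonsing_inv _ hAu, mul_one,
      Matrix.one_mul]
    abel
  rw [le_iff, key]
  exact (hAB.mul_mul_conjTranspose_same B⁻¹).add
    (hA.posSemidef.inv.mul_mul_conjTranspose_same (B⁻¹ * (B - A)))

lemma inv_smul_of_ne_zero {A : Matrix ι ι ℝ} (hA : IsUnit A.det) {c : ℝ} (hc : c ≠ 0) :
    (c • A)⁻¹ = c⁻¹ • A⁻¹ :=
  inv_smul' _ (Units.mk0 c hc) hA

lemma PosDef.inv_le_smul_inv {A B : Matrix ι ι ℝ} (hB : B.PosDef) {c : ℝ} (hc : 0 < c)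
    (h : c • B ≤ A) : A⁻¹ ≤ c⁻¹ • B⁻¹ := by
  simpa [inv_smul_of_ne_zero ((isUnit_iff_isUnit_det B).mp hB.isUnit) hc.ne']
    using (hB.smul hc).inv_le_inv h

lemma PosDef.smul_inv_le_inv {A B : Matrix ι ι ℝ} (hA : A.PosDef) (hB : B.PosDef) {c : ℝ}
    (hc : 0 < c) (h : A ≤ c • B) : c⁻¹ • B⁻¹ ≤ A⁻¹ := by
  simpa [inv_smul_of_ne_zero ((isUnit_iff_isUnit_det B).mp hB.isUnit) hc.ne']
    using hA.inv_le_inv h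

lemma PosSemidef.smul_inv_sq_le_inv {A : Matrix ι ι ℝ} (hA : A.PosSemidef) {l : ℝ}
    (hl : 0 < l) :
    l • (A + l • 1)⁻¹ ^ 2 ≤ (A + l • 1)⁻¹ := by
  set R := (A + l • 1)⁻¹
  have hu := (isUnit_iff_isUnit_det _).mp (hA.posDef_add_smul_one_s8 hl).isUnit
  have hR : Rᴴ = R := (hA.posDef_add_smul_one_s8 hl).posSemidef.inv.isHermitian.eq
  have key : R - l • R ^ 2 = R * A * Rᴴ := by
    rw [hR, sq, show A = (A + l • 1) - l • 1 by abel, Matrix.mul_sub, Matrix.sub_mul,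
      nonsing_inv_mul _ hu, Matrix.one_mul, Matrix.mul_smul, Matrix.smul_mul, Matrix.mul_one]
  rw [le_iff, key]
  exact hA.mul_mul_conjTranspose_same R

lemma trace_eq_sum_dotProduct_mulVec_s8 (X : Matrix ι ι ℝ)
    (b : OrthonormalBasis ι ℝ (EuclideanSpace ℝ ι)) :
    X.trace = ∑ i, ⇑(b i) ⬝ᵥ X *ᵥ ⇑(b i) := by
  rw [← trace_toLin_eq X (EuclideanSpace.basisFun ι ℝ).toBasis,
    ← toEuclideanLin_eq_toLin_orthonormal, LinearMap.trace_eq_sum_inner _ b]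
  simp [EuclideanSpace.inner_eq_star_dotProduct, dotProduct_comm]

lemma inv_mulVec_eq_of_mulVec_eq_smul {A : Matrix ι ι ℝ} (hA : IsUnit A.det) {v : ι → ℝ}
    {c : ℝ} (hc : c ≠ 0) (h : A *ᵥ v = c • v) : A⁻¹ *ᵥ v = c⁻¹ • v := by
  calc A⁻¹ *ᵥ v = c⁻¹ • A⁻¹ *ᵥ (A *ᵥ v) := by
        rw [h, mulVec_smul, smul_smul, inv_mul_cancel₀ hc, one_smul]
    _ = c⁻¹ • v := by rw [mulVec_mulVec, nonsing_inv_mul _ hA, one_mulVec]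

lemma PosSemidef.inv_add_smul_one_mulVec_eigenvectorBasis {A : Matrix ι ι ℝ} (hA : A.PosSemidef)
    {l : ℝ} (hl : 0 < l) (i : ι) :
    (A + l • 1)⁻¹ *ᵥ ⇑(hA.1.eigenvectorBasis i) =
      (hA.1.eigenvalues i + l)⁻¹ • ⇑(hA.1.eigenvectorBasis i) := by
  refine inv_mulVec_eq_of_mulVec_eq_smul
    ((isUnit_iff_isUnit_det _).mp (hA.posDef_add_smul_one_s8 hl).isUnit)
    (by linarith [hA.eigenvalues_nonneg i]) ?_
  rw [add_mulVec, hA.1.mulVec_eigenvectorBasis, smul_mulVec, one_mulVec, add_smul]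

lemma IsHermitian.eigenvectorBasis_dotProduct_self {A : Matrix ι ι ℝ} (hA : A.IsHermitian)
    (i : ι) :
    ⇑(hA.eigenvectorBasis i) ⬝ᵥ ⇑(hA.eigenvectorBasis i) = 1 := by
  have h := orthonormal_iff_ite.mp hA.eigenvectorBasis.orthonormal i i
  rwa [if_pos rfl, EuclideanSpace.inner_eq_star_dotProduct, star_trivial] at h

lemma IsHermitian.rank_eq_sum_ite {A : Matrix ι ι ℝ} (hA : A.IsHermitian) :
    (A.rank : ℝ) = ∑ i, if hA.eigenvalues i = 0 then 0 else 1 := by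
  rw [hA.rank_eq_card_non_zero_eigs, Fintype.card_subtype, Finset.card_filter]
  push_cast [apply_ite (Nat.cast : ℕ → ℝ)]
  simp only [ite_not]

end Matrix

lemma sq_mul_inv_add_le {e l b Δ₁ Δ₂ : ℝ} (he : 0 ≤ e) (hl : 0 < l) (hΔ₁ : Δ₁ ∈ Set.Ico 0 1)
    (hΔ₂ : 0 ≤ Δ₂) (hb : l * b ≤ 1) (hbe : (1 + Δ₂)⁻¹ * b ≤ (e + l)⁻¹) :
    (e * (e + l)⁻¹) ^ 2 ≤
      Δ₂ / (1 + Δ₂) * (if e = 0 then 0 else 1) + (1 - Δ₁)⁻¹ * (1 - l * b) := by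
  obtain ⟨hΔ₁0, hΔ₁1⟩ := hΔ₁
  have hinv : (1 + Δ₂)⁻¹ ≤ (1 - Δ₁)⁻¹ := inv_anti₀ (by linarith) (by linarith)
  rcases he.eq_or_lt with rfl | he
  · simp only [zero_mul, ne_eq, OfNat.ofNat_ne_zero, not_false_eq_true, zero_pow, if_true,
      mul_zero, zero_add]
    exact mul_nonneg (inv_nonneg.mpr (by linarith)) (by linarith)
  · have hx : e * (e + l)⁻¹ = 1 - l * (e + l)⁻¹ := by field_simp; ring
    have hx0 : 0 ≤ e * (e + l)⁻¹ := by positivity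
    have hx1 : e * (e + l)⁻¹ ≤ 1 := by
      rw [hx]
      linarith [show 0 ≤ l * (e + l)⁻¹ by positivity]
    rw [if_neg he.ne', mul_one]
    calc (e * (e + l)⁻¹) ^ 2 ≤ e * (e + l)⁻¹ := by nlinarith
      _ ≤ 1 - l * ((1 + Δ₂)⁻¹ * b) := by rw [hx]; gcongr
      _ = Δ₂ / (1 + Δ₂) + (1 + Δ₂)⁻¹ * (1 - l * b) := by field_simp; ring
      _ ≤ Δ₂ / (1 + Δ₂) + (1 - Δ₁)⁻¹ * (1 - l * b) := by gcongr

namespace KernelRidge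

variable {ι : Type*} [Fintype ι] [DecidableEq ι]

lemma bias_le {K Kt : Matrix ι ι ℝ} (hK : K.PosSemidef) (hKt : Kt.PosSemidef) {l Δ₁ : ℝ}
    (hl : 0 < l) (hΔ₁ : Δ₁ < 1) (h1 : (1 - Δ₁) • (K + l • 1) ≤ Kt + l • 1)
    (y : ι → ℝ) :
    l ^ 2 * (y ⬝ᵥ (Kt + l • 1)⁻¹ ^ 2 *ᵥ y) ≤
      (1 - Δ₁)⁻¹ * (l * (y ⬝ᵥ (K + l • 1)⁻¹ *ᵥ y)) := by
  have hinv : (Kt + l • 1)⁻¹ ≤ (1 - Δ₁)⁻¹ • (K + l • 1)⁻¹ :=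
    (hK.posDef_add_smul_one_s8 hl).inv_le_smul_inv (by linarith) h1
  calc l ^ 2 * (y ⬝ᵥ (Kt + l • 1)⁻¹ ^ 2 *ᵥ y)
        = l * (y ⬝ᵥ (l • (Kt + l • 1)⁻¹ ^ 2) *ᵥ y) := by
        rw [smul_mulVec, dotProduct_smul, smul_eq_mul]; ring
    _ ≤ l * (y ⬝ᵥ (Kt + l • 1)⁻¹ *ᵥ y) :=
        mul_le_mul_of_nonneg_left (dotProduct_mulVec_le_of_le (hKt.smul_inv_sq_le_inv hl) y) hl.le
    _ ≤ l * (y ⬝ᵥ ((1 - Δ₁)⁻¹ • (K + l • 1)⁻¹) *ᵥ y) :=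
        mul_le_mul_of_nonneg_left (dotProduct_mulVec_le_of_le hinv y) hl.le
    _ = (1 - Δ₁)⁻¹ * (l * (y ⬝ᵥ (K + l • 1)⁻¹ *ᵥ y)) := by
        rw [smul_mulVec, dotProduct_smul, smul_eq_mul]; ring

lemma variance_le {K Kt : Matrix ι ι ℝ} (hK : K.PosSemidef) (hKt : Kt.PosSemidef)
    {l Δ₁ Δ₂ : ℝ} (hl : 0 < l) (hΔ₁ : Δ₁ ∈ Set.Ico 0 1) (hΔ₂ : 0 ≤ Δ₂)
    (h2 : Kt + l • 1 ≤ (1 + Δ₂) • (K + l • 1)) :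
    (Kt ^ 2 * (Kt + l • 1)⁻¹ ^ 2).trace ≤
      Δ₂ / (1 + Δ₂) * Kt.rank + (1 - Δ₁)⁻¹ * (K * (K + l • 1)⁻¹).trace := by
  set B := K + l • 1
  have hB : B.PosDef := hK.posDef_add_smul_one_s8 hl
  have hBinv : B⁻¹ ≤ l⁻¹ • 1 := by
    simpa using
      PosDef.one.inv_le_smul_inv hl (le_add_of_nonneg_left (nonneg_iff_posSemidef.mpr hK))
  have hKB : K * B⁻¹ = 1 - l • B⁻¹ := by
    rw [show K = B - l • 1 by simp [B], Matrix.sub_mul, mul_nonsing_inv _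
      ((isUnit_iff_isUnit_det _).mp hB.isUnit), Matrix.smul_mul, Matrix.one_mul]
  have hcomp : (1 + Δ₂)⁻¹ • B⁻¹ ≤ (Kt + l • 1)⁻¹ :=
    (hKt.posDef_add_smul_one_s8 hl).smul_inv_le_inv hB (by linarith) h2
  rw [trace_eq_sum_dotProduct_mulVec_s8 _ hKt.1.eigenvectorBasis,
    trace_eq_sum_dotProduct_mulVec_s8 _ hKt.1.eigenvectorBasis, hKt.1.rank_eq_sum_ite,
    Finset.mul_sum, Finset.mul_sum, ← Finset.sum_add_distrib]
  gcongr with i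
  have hv := hKt.1.eigenvectorBasis_dotProduct_self i
  have hAv := hKt.inv_add_smul_one_mulVec_eigenvectorBasis hl i
  have hKtv := hKt.1.mulVec_eigenvectorBasis i
  set v : ι → ℝ := ⇑(hKt.1.eigenvectorBasis i)
  set e := hKt.1.eigenvalues i
  have hlb : l * (v ⬝ᵥ B⁻¹ *ᵥ v) ≤ 1 := by
    have := dotProduct_mulVec_le_of_le hBinv v
    rw [smul_mulVec, one_mulVec, dotProduct_smul, hv, smul_eq_mul, mul_one] at this
    exact (le_inv_mul_iff₀ hl).mp (by simpa using this)
  have hbe : (1 + Δ₂)⁻¹ * (v ⬝ᵥ B⁻¹ *ᵥ v) ≤ (e + l)⁻¹ := by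
    have := dotProduct_mulVec_le_of_le hcomp v
    rwa [smul_mulVec, dotProduct_smul, hAv, dotProduct_smul, hv, smul_eq_mul, smul_eq_mul,
      mul_one] at this
  have hquad : v ⬝ᵥ (Kt ^ 2 * (Kt + l • 1)⁻¹ ^ 2) *ᵥ v = (e * (e + l)⁻¹) ^ 2 := by
    simp only [sq, ← mulVec_mulVec, hAv, hKtv, mulVec_smul, smul_smul, dotProduct_smul, hv,
      smul_eq_mul]
    ring
  have hKBv : v ⬝ᵥ (K * B⁻¹) *ᵥ v = 1 - l * (v ⬝ᵥ B⁻¹ *ᵥ v) := by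
    rw [hKB, sub_mulVec, one_mulVec, dotProduct_sub, hv, smul_mulVec, dotProduct_smul, smul_eq_mul]
  rw [hquad, hKBv]
  exact sq_mul_inv_add_le (hKt.eigenvalues_nonneg i) hl hΔ₁ hΔ₂ hlb hbe

end KernelRidge

theorem stmt8_general {n : ℕ} (K Kt : Matrix (Fin n) (Fin n) ℝ) (m : ℕ)
    (hK : K.PosSemidef) (hKt : Kt.PosSemidef) (hrank : Kt.rank = m)
    (l Δ₁ Δ₂ σ : ℝ) (hl : 0 < l) (hΔ₁ : Δ₁ ∈ Set.Ico (0 : ℝ) 1) (hΔ₂ : 0 ≤ Δ₂)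
    (h1 : ((Kt + l • 1) - (1 - Δ₁) • (K + l • 1)).PosSemidef)
    (h2 : ((1 + Δ₂) • (K + l • 1) - (Kt + l • 1)).PosSemidef)
    (y : Fin n → ℝ) :
    (l ^ 2 / n) * (y ⬝ᵥ ((Kt + l • 1)⁻¹ ^ 2 *ᵥ y)) +
        (σ ^ 2 / n) * (Kt ^ 2 * (Kt + l • 1)⁻¹ ^ 2).trace ≤
      (1 / (1 - Δ₁)) * ((l / n) * (y ⬝ᵥ ((K + l • 1)⁻¹ *ᵥ y)) +
          (σ ^ 2 / n) * (K * (K + l • 1)⁻¹).trace) +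
        (Δ₂ / (1 + Δ₂)) * (m / n) * σ ^ 2 := by
  have hbias := KernelRidge.bias_le hK hKt hl hΔ₁.2 h1 y
  have hvar := KernelRidge.variance_le hK hKt hl hΔ₁ hΔ₂ h2
  rw [hrank] at hvar
  calc (l ^ 2 / n) * (y ⬝ᵥ ((Kt + l • 1)⁻¹ ^ 2 *ᵥ y)) +
        (σ ^ 2 / n) * (Kt ^ 2 * (Kt + l • 1)⁻¹ ^ 2).trace
      = (1 / n) * (l ^ 2 * (y ⬝ᵥ ((Kt + l • 1)⁻¹ ^ 2 *ᵥ y)) +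
          σ ^ 2 * (Kt ^ 2 * (Kt + l • 1)⁻¹ ^ 2).trace) := by ring
    _ ≤ (1 / n) * ((1 - Δ₁)⁻¹ * (l * (y ⬝ᵥ (K + l • 1)⁻¹ *ᵥ y)) +
          σ ^ 2 * (Δ₂ / (1 + Δ₂) * m + (1 - Δ₁)⁻¹ * (K * (K + l • 1)⁻¹).trace)) := by
        gcongr
    _ = _ := by ring

theorem stmt8 {n : ℕ} (hn : 0 < n) (K Kt : Matrix (Fin n) (Fin n) ℝ) (m : ℕ)
    (hK : K.PosSemidef) (hKt : Kt.PosSemidef) (hrank : Kt.rank = m)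
    (l Δ₁ Δ₂ σ : ℝ) (hl : 0 < l) (hΔ₁ : Δ₁ ∈ Set.Ico (0 : ℝ) 1) (hΔ₂ : 0 ≤ Δ₂)
    (h1 : ((Kt + l • 1) - (1 - Δ₁) • (K + l • 1)).PosSemidef)
    (h2 : ((1 + Δ₂) • (K + l • 1) - (Kt + l • 1)).PosSemidef)
    (y : Fin n → ℝ) :
    (l ^ 2 / n) * (y ⬝ᵥ ((Kt + l • 1)⁻¹ ^ 2 *ᵥ y)) +
        (σ ^ 2 / n) * (Kt ^ 2 * (Kt + l • 1)⁻¹ ^ 2).trace ≤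
      (1 / (1 - Δ₁)) * ((l / n) * (y ⬝ᵥ ((K + l • 1)⁻¹ *ᵥ y)) +
          (σ ^ 2 / n) * (K * (K + l • 1)⁻¹).trace) +
        (Δ₂ / (1 + Δ₂)) * (m / n) * σ ^ 2 :=
  stmt8_general K Kt m hK hKt hrank l Δ₁ Δ₂ σ hl hΔ₁ hΔ₂ h1 h2 y
end

section
/- Under the hypotheses that K, K̃ share an eigenbasis and (1-Δ₁)(K+λI) ⪯ K̃+λI ⪯ (1+Δ₂)(K+λI), the bias satisfies ‖(K̃+λI)^{-1}ȳ‖ ≤ (1 + (1+Δ₂)/(1-Δ₁))·‖(K+λI)^{-1}ȳ‖, and hence (λ²/n)ȳᵀ(K̃+λI)^{-2}ȳ ≤ (1 + (1+Δ₂)/(1-Δ₁))²·(λ²/n)ȳᵀ(K+λI)^{-2}ȳ. -/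
open Matrix

theorem stmt13 {n : ℕ} (hn : 0 < n) (K Kt : Matrix (Fin n) (Fin n) ℝ)
    (hK : K.PosSemidef) (hKt : Kt.PosSemidef)
    (U : Matrix (Fin n) (Fin n) ℝ) (d1 d2 : Fin n → ℝ)
    (hU : U * Uᵀ = 1)
    (hKd : K = U * Matrix.diagonal d1 * Uᵀ)
    (hKtd : Kt = U * Matrix.diagonal d2 * Uᵀ)
    (l Δ₁ Δ₂ : ℝ) (hl : 0 < l) (hΔ₁ : Δ₁ ∈ Set.Ico (0 : ℝ) 1) (hΔ₂ : 0 ≤ Δ₂)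
    (h1 : ((Kt + l • 1) - (1 - Δ₁) • (K + l • 1)).PosSemidef)
    (h2 : ((1 + Δ₂) • (K + l • 1) - (Kt + l • 1)).PosSemidef)
    (y : Fin n → ℝ) :
    Real.sqrt (((Kt + l • 1)⁻¹ *ᵥ y) ⬝ᵥ ((Kt + l • 1)⁻¹ *ᵥ y)) ≤
        (1 + (1 + Δ₂) / (1 - Δ₁)) *
          Real.sqrt (((K + l • 1)⁻¹ *ᵥ y) ⬝ᵥ ((K + l • 1)⁻¹ *ᵥ y)) ∧
      (l ^ 2 / n) * (y ⬝ᵥ ((Kt + l • 1)⁻¹ ^ 2 *ᵥ y)) ≤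
        (1 + (1 + Δ₂) / (1 - Δ₁)) ^ 2 *
          ((l ^ 2 / n) * (y ⬝ᵥ ((K + l • 1)⁻¹ ^ 2 *ᵥ y))) := by
  obtain ⟨hΔ₁0, hΔ₁1⟩ := hΔ₁
  have h1Δ : (0:ℝ) < 1 - Δ₁ := by linarith
  have hUtU : Uᵀ * U = 1 := mul_eq_one_comm.mp hU
  set c : ℝ := 1 + (1 + Δ₂) / (1 - Δ₁) with hc
  have hcpos : 0 < c := by
    have h' : 0 < (1 + Δ₂) / (1 - Δ₁) := div_pos (by linarith) h1Δ
    rw [hc]; linarith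
  -- eigenvalues of conjugated PSD matrices are nonneg
  have key : ∀ d : Fin n → ℝ, (U * Matrix.diagonal d * Uᵀ).PosSemidef → ∀ i, 0 ≤ d i := by
    intro d hd i
    have h2' := hd.conjTranspose_mul_mul_same U
    rw [Matrix.conjTranspose_eq_transpose_of_trivial] at h2'
    have e : Uᵀ * (U * Matrix.diagonal d * Uᵀ) * U = Matrix.diagonal d := by
      simp only [← Matrix.mul_assoc]
      rw [hUtU, Matrix.one_mul, Matrix.mul_assoc, hUtU, Matrix.mul_one]
    rw [e] at h2'
    exact Matrix.posSemidef_diagonal_iff.mp h2' i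
  have conj_add : ∀ a : Fin n → ℝ,
      U * Matrix.diagonal a * Uᵀ + l • 1 = U * Matrix.diagonal (fun i => a i + l) * Uᵀ := by
    intro a
    have hdiag : (Matrix.diagonal fun i : Fin n => a i + l)
        = Matrix.diagonal a + l • (1 : Matrix (Fin n) (Fin n) ℝ) := by
      ext i j
      rcases eq_or_ne i j with rfl | h
      · simp [Matrix.diagonal_apply_eq]
      · simp [Matrix.diagonal_apply_ne _ h, Matrix.one_apply_ne h]
    rw [hdiag, Matrix.mul_add, Matrix.add_mul, Matrix.mul_smul, Matrix.smul_mul,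
      Matrix.mul_one, hU]
  have conj_mul : ∀ a b : Fin n → ℝ,
      (U * Matrix.diagonal a * Uᵀ) * (U * Matrix.diagonal b * Uᵀ)
        = U * Matrix.diagonal (fun i => a i * b i) * Uᵀ := by
    intro a b
    simp only [Matrix.mul_assoc]
    rw [← Matrix.mul_assoc Uᵀ U, hUtU, Matrix.one_mul,
      ← Matrix.mul_assoc (Matrix.diagonal a), Matrix.diagonal_mul_diagonal]
  have conj_inv : ∀ a : Fin n → ℝ, (∀ i, a i ≠ 0) →
      (U * Matrix.diagonal a * Uᵀ)⁻¹ = U * Matrix.diagonal (fun i => (a i)⁻¹) * Uᵀ := by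
    intro a ha
    apply Matrix.inv_eq_right_inv
    rw [conj_mul]
    have : (fun i => a i * (a i)⁻¹) = fun _ : Fin n => (1:ℝ) :=
      funext fun i => mul_inv_cancel₀ (ha i)
    rw [this, Matrix.diagonal_one, Matrix.mul_one, hU]
  -- quadratic forms
  set z : Fin n → ℝ := Uᵀ *ᵥ y with hz
  have dotU : ∀ w : Fin n → ℝ, (U *ᵥ w) ⬝ᵥ (U *ᵥ w) = w ⬝ᵥ w := by
    intro w
    rw [Matrix.dotProduct_mulVec, ← Matrix.mulVec_transpose, Matrix.mulVec_mulVec, hUtU,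
      Matrix.one_mulVec]
  have qform : ∀ g : Fin n → ℝ,
      ((U * Matrix.diagonal g * Uᵀ) *ᵥ y) ⬝ᵥ ((U * Matrix.diagonal g * Uᵀ) *ᵥ y)
        = ∑ i, (g i * z i) ^ 2 := by
    intro g
    rw [Matrix.mul_assoc, ← Matrix.mulVec_mulVec, ← Matrix.mulVec_mulVec, dotU]
    simp only [dotProduct, Matrix.mulVec_diagonal, hz, sq]
  have qform2 : ∀ g : Fin n → ℝ,
      y ⬝ᵥ ((U * Matrix.diagonal g * Uᵀ) *ᵥ y) = ∑ i, g i * (z i) ^ 2 := by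
    intro g
    rw [Matrix.mul_assoc, ← Matrix.mulVec_mulVec, ← Matrix.mulVec_mulVec,
      Matrix.dotProduct_mulVec, ← Matrix.mulVec_transpose]
    simp only [dotProduct, Matrix.mulVec_diagonal, hz]
    exact Finset.sum_congr rfl (fun i _ => by ring)
  set e1 : Fin n → ℝ := fun i => d1 i + l with he1d
  set e2 : Fin n → ℝ := fun i => d2 i + l with he2d
  have hd1 : ∀ i, 0 ≤ d1 i := key d1 (hKd ▸ hK)
  have he1 : ∀ i, 0 < e1 i := fun i => by have := hd1 i; simp only [he1d]; linarith
  have hA : K + l • 1 = U * Matrix.diagonal e1 * Uᵀ := by rw [hKd, conj_add]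
  have hB : Kt + l • 1 = U * Matrix.diagonal e2 * Uᵀ := by rw [hKtd, conj_add]
  have hM : (Kt + l • 1) - (1 - Δ₁) • (K + l • 1)
      = U * Matrix.diagonal (fun i => e2 i - (1 - Δ₁) * e1 i) * Uᵀ := by
    rw [hA, hB]
    have hdiag : (Matrix.diagonal fun i => e2 i - (1 - Δ₁) * e1 i)
        = Matrix.diagonal e2 - (1 - Δ₁) • Matrix.diagonal e1 := by
      rw [← Matrix.diagonal_smul, ← Matrix.diagonal_sub]
      congr 1
    rw [hdiag, Matrix.mul_sub, Matrix.sub_mul, Matrix.mul_smul, Matrix.smul_mul]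
  have hev : ∀ i, (1 - Δ₁) * e1 i ≤ e2 i := by
    intro i
    have := key _ (hM ▸ h1) i
    linarith
  have he2 : ∀ i, 0 < e2 i := fun i =>
    lt_of_lt_of_le (mul_pos h1Δ (he1 i)) (hev i)
  have hcge : (1 - Δ₁)⁻¹ ≤ c := by
    have h' : (1:ℝ) / (1 - Δ₁) ≤ (1 + Δ₂) / (1 - Δ₁) := by gcongr; linarith
    rw [inv_eq_one_div]
    rw [hc]; linarith
  have hgle : ∀ i, (e2 i)⁻¹ ≤ c * (e1 i)⁻¹ := by
    intro i
    calc (e2 i)⁻¹ ≤ ((1 - Δ₁) * e1 i)⁻¹ := by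
          apply inv_anti₀ (mul_pos h1Δ (he1 i)) (hev i)
      _ = (1 - Δ₁)⁻¹ * (e1 i)⁻¹ := by rw [mul_inv]
      _ ≤ c * (e1 i)⁻¹ := by
          exact mul_le_mul_of_nonneg_right hcge (inv_nonneg.mpr (he1 i).le)
  have hsum : ∑ i, ((e2 i)⁻¹ * z i) ^ 2 ≤ c ^ 2 * ∑ i, ((e1 i)⁻¹ * z i) ^ 2 := by
    rw [Finset.mul_sum]
    apply Finset.sum_le_sum
    intro i _
    have h0 : (0:ℝ) ≤ (e2 i)⁻¹ := inv_nonneg.mpr (he2 i).le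
    calc ((e2 i)⁻¹ * z i) ^ 2 = ((e2 i)⁻¹) ^ 2 * (z i) ^ 2 := by ring
      _ ≤ (c * (e1 i)⁻¹) ^ 2 * (z i) ^ 2 :=
          mul_le_mul_of_nonneg_right (pow_le_pow_left₀ h0 (hgle i) 2) (sq_nonneg _)
      _ = c ^ 2 * ((e1 i)⁻¹ * z i) ^ 2 := by ring
  have hAinv : (K + l • 1)⁻¹ = U * Matrix.diagonal (fun i => (e1 i)⁻¹) * Uᵀ := by
    rw [hA]; exact conj_inv e1 (fun i => (he1 i).ne')
  have hBinv : (Kt + l • 1)⁻¹ = U * Matrix.diagonal (fun i => (e2 i)⁻¹) * Uᵀ := by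
    rw [hB]; exact conj_inv e2 (fun i => (he2 i).ne')
  constructor
  · rw [hAinv, hBinv, qform, qform]
    have h' := Real.sqrt_le_sqrt hsum
    rwa [Real.sqrt_mul (sq_nonneg c), Real.sqrt_sq hcpos.le] at h'
  · have hAsq : ((K + l • 1)⁻¹) ^ 2
        = U * Matrix.diagonal (fun i => (e1 i)⁻¹ * (e1 i)⁻¹) * Uᵀ := by
      rw [sq, hAinv, conj_mul]
    have hBsq : ((Kt + l • 1)⁻¹) ^ 2
        = U * Matrix.diagonal (fun i => (e2 i)⁻¹ * (e2 i)⁻¹) * Uᵀ := by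
      rw [sq, hBinv, conj_mul]
    rw [hAsq, hBsq, qform2, qform2]
    have e2' : ∑ i, ((e2 i)⁻¹ * (e2 i)⁻¹) * (z i) ^ 2 = ∑ i, ((e2 i)⁻¹ * z i) ^ 2 :=
      Finset.sum_congr rfl (fun i _ => by ring)
    have e1' : ∑ i, ((e1 i)⁻¹ * (e1 i)⁻¹) * (z i) ^ 2 = ∑ i, ((e1 i)⁻¹ * z i) ^ 2 :=
      Finset.sum_congr rfl (fun i _ => by ring)
    rw [e2', e1']
    have hln : (0:ℝ) ≤ l ^ 2 / (n:ℝ) := by positivity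
    calc (l ^ 2 / (n:ℝ)) * ∑ i, ((e2 i)⁻¹ * z i) ^ 2
        ≤ (l ^ 2 / (n:ℝ)) * (c ^ 2 * ∑ i, ((e1 i)⁻¹ * z i) ^ 2) :=
          mul_le_mul_of_nonneg_left hsum hln
      _ = c ^ 2 * ((l ^ 2 / (n:ℝ)) * ∑ i, ((e1 i)⁻¹ * z i) ^ 2) := by ring
end
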